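/- arXiv:2003.04669 — 8 statements merged into one kernel-verified Lean document; each statement's English description precedes it below -/
import Mathlib

section
/- (Proposition 1, CH inequality for biased unsharp measurements.) Let (Λ, μ) be a probability space, let η_a, α_a, η_b, α_b be real numbers, and fix j, k ∈ {+1, −1}. Let p_A : S² × Λ → ℝ and p_B : S² × Λ → ℝ be measurable response functions such that for every measurement direction and every λ ∈ Λ, (1 + j·η_a − |α_a|)/2 ≤ p_A(a, λ) ≤ (1 + j·η_a + |α_a|)/2 and (1 + k·η_b − |α_b|)/2 ≤ p_B(b, λ) ≤ (1 + k·η_b + |α_b|)/2, and all these bounds lie in [0,1]. Define the local-realistic joint distribution P_{jk}(a, b) := ∫_Λ p_A(a, λ) p_B(b, λ) dμ(λ) and marginals P_j(a) := ∫_Λ p_A(a, λ) dμ(λ), P_k(b) := ∫_Λ p_B(b, λ) dμ(λ). Then for all unit vectors a, a', b, b' ∈ ℝ³: P_{jk}(a, b) − P_{jk}(a, b') + P_{jk}(a', b) + P_{jk}(a', b') − (1 + k·η_b)·P_j(a') − (1 + j·η_a)·P_k(b) + ((1 + j·η_a)(1 + k·η_b) − |α_a·α_b|)/2 ≤ 0.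 -/
/-!
Pointwise in the hidden variable, centre every response at the midpoint of its interval:
`pA = s/2 + x`, `pB = t/2 + y` with `s = 1 + j ηa`, `t = 1 + k ηb`. The Clauser–Horne
combination then collapses to `x (y - y') + x' (y + y') - |αa| |αb| / 2`, with
`|x|, |x'| ≤ |αa|/2` and `|y|, |y'| ≤ |αb|/2`, which is nonpositive by the CHSH bound.
Integrating against `μ` gives the inequality; all integrands are bounded, hence integrable.
-/

open MeasureTheory Set

theorem abs_sub_add_abs_add_le {y y' q : ℝ} (hy : |y| ≤ q) (hy' : |y'| ≤ q) :
    |y - y'| + |y + y'| ≤ 2 * q := by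
  rw [abs_le] at hy hy'
  rcases abs_cases (y - y') with ⟨h₁, -⟩ | ⟨h₁, -⟩ <;>
    rcases abs_cases (y + y') with ⟨h₂, -⟩ | ⟨h₂, -⟩ <;> linarith

theorem chsh_bound {x x' y y' p q : ℝ} (hx : |x| ≤ p) (hx' : |x'| ≤ p)
    (hy : |y| ≤ q) (hy' : |y'| ≤ q) : x * (y - y') + x' * (y + y') ≤ 2 * p * q := by
  have hp : 0 ≤ p := (abs_nonneg x).trans hx
  calc x * (y - y') + x' * (y + y') ≤ |x| * |y - y'| + |x'| * |y + y'| := by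
        rw [← abs_mul, ← abs_mul]; exact add_le_add (le_abs_self _) (le_abs_self _)
    _ ≤ p * (|y - y'| + |y + y'|) := by rw [mul_add]; gcongr
    _ ≤ 2 * p * q := by nlinarith [abs_sub_add_abs_add_le hy hy']

theorem clauser_horne_nonpos {s t α β A A' B B' : ℝ}
    (hA : A ∈ Icc ((s - α) / 2) ((s + α) / 2)) (hA' : A' ∈ Icc ((s - α) / 2) ((s + α) / 2))
    (hB : B ∈ Icc ((t - β) / 2) ((t + β) / 2)) (hB' : B' ∈ Icc ((t - β) / 2) ((t + β) / 2)) :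
    A * B - A * B' + A' * B + A' * B' - t * A' - s * B + (s * t - α * β) / 2 ≤ 0 := by
  have centered : ∀ {C u γ : ℝ}, C ∈ Icc ((u - γ) / 2) ((u + γ) / 2) → |C - u / 2| ≤ γ / 2 :=
    fun hC => abs_le.2 ⟨by linarith [hC.1], by linarith [hC.2]⟩
  have := chsh_bound (centered hA) (centered hA') (centered hB) (centered hB')
  linarith

theorem integrable_mul_of_mem_Icc {Ω : Type*} [MeasurableSpace Ω] {μ : Measure Ω}
    [IsFiniteMeasure μ] {f g : Ω → ℝ} {a b c d : ℝ} (hf : Measurable f) (hg : Measurable g)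
    (hfI : ∀ x, f x ∈ Icc a b) (hgI : ∀ x, g x ∈ Icc c d) :
    Integrable (fun x => f x * g x) μ :=
  (Integrable.of_mem_Icc c d hg.aemeasurable (ae_of_all _ hgI)).bdd_mul hf.aestronglyMeasurable
    (ae_of_all _ fun x => abs_le_max_abs_abs (hfI x).1 (hfI x).2)

theorem stmt_4_general {Λ : Type*} [MeasurableSpace Λ] (μ : Measure Λ) [IsProbabilityMeasure μ]
    (ηa αa ηb αb : ℝ) (j k : ℝ)
    (pA pB : EuclideanSpace ℝ (Fin 3) → Λ → ℝ)
    (hmA : ∀ a, Measurable (pA a)) (hmB : ∀ b, Measurable (pB b))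
    (hA : ∀ a, ‖a‖ = 1 → ∀ x : Λ,
      (1 + j * ηa - |αa|) / 2 ≤ pA a x ∧ pA a x ≤ (1 + j * ηa + |αa|) / 2)
    (hB : ∀ b, ‖b‖ = 1 → ∀ x : Λ,
      (1 + k * ηb - |αb|) / 2 ≤ pB b x ∧ pB b x ≤ (1 + k * ηb + |αb|) / 2)
    (a a' b b' : EuclideanSpace ℝ (Fin 3))
    (ha : ‖a‖ = 1) (ha' : ‖a'‖ = 1) (hb : ‖b‖ = 1) (hb' : ‖b'‖ = 1) :
    (∫ x, pA a x * pB b x ∂μ) - (∫ x, pA a x * pB b' x ∂μ)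
      + (∫ x, pA a' x * pB b x ∂μ) + (∫ x, pA a' x * pB b' x ∂μ)
      - (1 + k * ηb) * (∫ x, pA a' x ∂μ) - (1 + j * ηa) * (∫ x, pB b x ∂μ)
      + ((1 + j * ηa) * (1 + k * ηb) - |αa * αb|) / 2 ≤ 0 := by
  have intAB : ∀ c d, ‖c‖ = 1 → ‖d‖ = 1 → Integrable (fun x => pA c x * pB d x) μ :=
    fun c d hc hd => integrable_mul_of_mem_Icc (hmA c) (hmB d) (hA c hc) (hB d hd)
  have intA : Integrable (pA a') μ :=
    .of_mem_Icc _ _ (hmA a').aemeasurable (ae_of_all _ (hA a' ha'))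
  have intB : Integrable (pB b) μ :=
    .of_mem_Icc _ _ (hmB b).aemeasurable (ae_of_all _ (hB b hb))
  have hpt : ∫ x, (pA a x * pB b x - pA a x * pB b' x + pA a' x * pB b x + pA a' x * pB b' x
      - (1 + k * ηb) * pA a' x - (1 + j * ηa) * pB b x
      + ((1 + j * ηa) * (1 + k * ηb) - |αa * αb|) / 2) ∂μ ≤ 0 :=
    integral_nonpos fun x => by
      rw [abs_mul]
      exact clauser_horne_nonpos (hA a ha x) (hA a' ha' x) (hB b hb x) (hB b' hb' x)
  rwa [integral_add, integral_sub, integral_sub, integral_add, integral_add, integral_sub,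
    integral_const_mul, integral_const_mul, integral_const, smul_eq_mul, probReal_univ,
    one_mul] at hpt
  all_goals first | exact intAB _ _ ‹_› ‹_› | fun_prop

theorem stmt_4 {Λ : Type*} [MeasurableSpace Λ] (μ : Measure Λ) [IsProbabilityMeasure μ]
    (ηa αa ηb αb : ℝ) (j k : ℝ) (hj : j = 1 ∨ j = -1) (hk : k = 1 ∨ k = -1)
    (pA pB : EuclideanSpace ℝ (Fin 3) → Λ → ℝ)
    (hmA : ∀ a, Measurable (pA a)) (hmB : ∀ b, Measurable (pB b))
    (hA : ∀ a, ‖a‖ = 1 → ∀ x : Λ,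
      (1 + j * ηa - |αa|) / 2 ≤ pA a x ∧ pA a x ≤ (1 + j * ηa + |αa|) / 2)
    (hB : ∀ b, ‖b‖ = 1 → ∀ x : Λ,
      (1 + k * ηb - |αb|) / 2 ≤ pB b x ∧ pB b x ≤ (1 + k * ηb + |αb|) / 2)
    (hA0 : 0 ≤ (1 + j * ηa - |αa|) / 2) (hA1 : (1 + j * ηa + |αa|) / 2 ≤ 1)
    (hB0 : 0 ≤ (1 + k * ηb - |αb|) / 2) (hB1 : (1 + k * ηb + |αb|) / 2 ≤ 1)
    (a a' b b' : EuclideanSpace ℝ (Fin 3))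
    (ha : ‖a‖ = 1) (ha' : ‖a'‖ = 1) (hb : ‖b‖ = 1) (hb' : ‖b'‖ = 1) :
    (∫ x, pA a x * pB b x ∂μ) - (∫ x, pA a x * pB b' x ∂μ)
      + (∫ x, pA a' x * pB b x ∂μ) + (∫ x, pA a' x * pB b' x ∂μ)
      - (1 + k * ηb) * (∫ x, pA a' x ∂μ) - (1 + j * ηa) * (∫ x, pB b x ∂μ)
      + ((1 + j * ηa) * (1 + k * ηb) - |αa * αb|) / 2 ≤ 0 :=
  stmt_4_general μ ηa αa ηb αb j k pA pB hmA hmB hA hB a a' b b' ha ha' hb hb'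
end

section
/- (Proposition 3, Leggett inequality for biased unsharp measurements.) Let F be a probability measure on S² × S² (pairs λ = (u, v) of unit polarization vectors), let η_b, α_b be real numbers, and suppose that for each λ there are measurable functions Ā_λ(a), B̄_λ(b), and C_λ(a, b) with |C_λ(a,b)| ≤ 1, satisfying the Leggett-model constraints: B̄_λ(b) = η_b + α_b·(v·b) for all unit b, and |Ā_λ(a) + B̄_λ(b)| ≤ 1 + C_λ(a, b) and |Ā_λ(a) − B̄_λ(b)| ≤ 1 − C_λ(a, b) for all unit a, b. Define E(a, b) := ∫ C_λ(a, b) dF(λ). Let φ ∈ [0, π], and for i = 1, 2, 3 let a_i, b_i, b_i' be unit vectors in ℝ³ such that each pair b_i, b_i' subtends angle φ (i.e. b_i·b_i' = cos φ) and the three difference vectors b_1 − b_1', b_2 − b_2', b_3 − b_3' are mutually orthogonal. Then (1/3)·Σ_{i=1}^{3} |E(a_i, b_i) + E(a_i, b_i')| + (2|α_b|/3)·|sin(φ/2)| ≤ 2. -/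
/- Pointwise in λ, the four positivity constraints for the settings (a, b) and
(a, b') give |C_λ(a, b) + C_λ(a, b')| ≤ 2 - |B̄_λ(b) - B̄_λ(b')|, and by Malus' law the last
term is |α_b| |v · (b - b')|. Integrating, each |E(a_i, b_i) + E(a_i, b_i')| is at most
2 - |α_b| ∫ |v · d_i| dF with d_i = b_i - b_i'. The d_i are orthogonal of common length
2 |sin (φ/2)|, so after normalisation they form an orthonormal basis of ℝ³, and the ℓ²-norm of
the coordinates of the unit vector v is bounded by their ℓ¹-norm:
Σ_i |v · d_i| ≥ 2 |sin (φ/2)| for every v. -/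

open scoped RealInnerProductSpace
open MeasureTheory

noncomputable section

/-- The unit sphere S² ⊆ ℝ³. -/
abbrev Sph := Metric.sphere (0 : EuclideanSpace ℝ (Fin 3)) 1

open Real Finset Module

theorem abs_add_le_two_sub_abs_sub {A B B' C C' : ℝ} (h₁ : |A + B| ≤ 1 + C)
    (h₂ : |A - B| ≤ 1 - C) (h₃ : |A + B'| ≤ 1 + C') (h₄ : |A - B'| ≤ 1 - C') :
    |C + C'| ≤ 2 - |B - B'| := by
  rw [abs_le] at h₁ h₂ h₃ h₄
  rcases abs_cases (B - B') with ⟨h, -⟩ | ⟨h, -⟩ <;> rw [abs_le] <;> constructor <;> linarith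

theorem abs_integral_add_integral_le_two_sub {Ω : Type*} [MeasurableSpace Ω] {μ : Measure Ω}
    [IsProbabilityMeasure μ] {A B B' C C' : Ω → ℝ} (hC : Integrable C μ) (hC' : Integrable C' μ)
    (hB : Integrable (fun x => |B x - B' x|) μ)
    (h₁ : ∀ x, |A x + B x| ≤ 1 + C x) (h₂ : ∀ x, |A x - B x| ≤ 1 - C x)
    (h₃ : ∀ x, |A x + B' x| ≤ 1 + C' x) (h₄ : ∀ x, |A x - B' x| ≤ 1 - C' x) :
    |∫ x, C x ∂μ + ∫ x, C' x ∂μ| ≤ 2 - ∫ x, |B x - B' x| ∂μ :=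
  calc |∫ x, C x ∂μ + ∫ x, C' x ∂μ| = ‖∫ x, C x + C' x ∂μ‖ := by
        rw [integral_add hC hC', Real.norm_eq_abs]
    _ ≤ ∫ x, 2 - |B x - B' x| ∂μ :=
        norm_integral_le_of_norm_le ((integrable_const 2).sub hB) <| .of_forall fun x =>
          abs_add_le_two_sub_abs_sub (h₁ x) (h₂ x) (h₃ x) (h₄ x)
    _ = 2 - ∫ x, |B x - B' x| ∂μ := by simp [integral_sub (integrable_const 2) hB]

theorem norm_sub_eq_two_mul_abs_sin_half {E : Type*} [NormedAddCommGroup E]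
    [InnerProductSpace ℝ E] {x y : E} {φ : ℝ} (hx : ‖x‖ = 1) (hy : ‖y‖ = 1)
    (hxy : ⟪x, y⟫ = cos φ) : ‖x - y‖ = 2 * |sin (φ / 2)| := by
  have hcos : cos φ = 1 - 2 * sin (φ / 2) ^ 2 := by
    rw [← cos_two_mul_eq_one_sub, mul_div_cancel₀ φ two_ne_zero]
  rw [← abs_two, ← abs_mul, ← sqrt_sq_eq_abs, ← sqrt_sq (norm_nonneg _), norm_sub_sq_real,
    hx, hy, hxy, hcos]
  ring_nf

theorem OrthonormalBasis.norm_le_sum_abs_inner {ι E : Type*} [Fintype ι] [NormedAddCommGroup E]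
    [InnerProductSpace ℝ E] (b : OrthonormalBasis ι ℝ E) (v : E) :
    ‖v‖ ≤ ∑ i, |⟪v, b i⟫| := by
  refine (sq_le_sq₀ (norm_nonneg v) (sum_nonneg fun i _ => abs_nonneg _)).1 ?_
  calc ‖v‖ ^ 2 = ∑ i, |⟪v, b i⟫| ^ 2 := by simp_rw [sq_abs, b.sum_sq_inner_left]
    _ ≤ (∑ i, |⟪v, b i⟫|) ^ 2 := sum_sq_le_sq_sum_of_nonneg fun i _ => abs_nonneg _

theorem mul_norm_le_sum_abs_inner_of_pairwise_orthogonal {ι E : Type*} [Fintype ι]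
    [NormedAddCommGroup E] [InnerProductSpace ℝ E] [FiniteDimensional ℝ E] {d : ι → E} {s : ℝ}
    (hcard : Fintype.card ι = finrank ℝ E) (hd : ∀ i, ‖d i‖ = s)
    (horth : Pairwise fun i j => ⟪d i, d j⟫ = 0) (v : E) :
    s * ‖v‖ ≤ ∑ i, |⟪v, d i⟫| := by
  rcases le_or_gt s 0 with hs | hs
  · exact (mul_nonpos_of_nonpos_of_nonneg hs (norm_nonneg v)).trans
      (sum_nonneg fun i _ => abs_nonneg _)
  have hon : Orthonormal ℝ fun i => s⁻¹ • d i := by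
    classical
    refine orthonormal_iff_ite.2 fun i j => ?_
    rw [real_inner_smul_left, real_inner_smul_right]
    split_ifs with hij
    · rw [hij, real_inner_self_eq_norm_sq, hd]
      field_simp
    · rw [horth hij, mul_zero, mul_zero]
  let e := OrthonormalBasis.mk hon (hon.linearIndependent.span_eq_top_of_card_eq_finrank' hcard).ge
  calc s * ‖v‖ ≤ s * ∑ i, |⟪v, e i⟫| := by gcongr; exact e.norm_le_sum_abs_inner v
    _ = ∑ i, |⟪v, d i⟫| := by
      simp [e, mul_sum, real_inner_smul_right, abs_mul, abs_of_pos hs, hs.ne']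

theorem integrable_abs_inner_snd (μ : Measure (Sph × Sph)) [IsFiniteMeasure μ]
    (w : EuclideanSpace ℝ (Fin 3)) :
    Integrable (fun l : Sph × Sph => |⟪(l.2 : EuclideanSpace ℝ (Fin 3)), w⟫|) μ := by
  refine .of_bound (by fun_prop : Continuous _).aestronglyMeasurable ‖w‖ (.of_forall fun l => ?_)
  simpa [norm_eq_of_mem_sphere] using abs_real_inner_le_norm (l.2 : EuclideanSpace ℝ (Fin 3)) w

theorem le_sum_integral_abs_inner (μ : Measure (Sph × Sph)) [IsProbabilityMeasure μ]
    {d : Fin 3 → EuclideanSpace ℝ (Fin 3)} {s : ℝ} (hd : ∀ i, ‖d i‖ = s)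
    (horth : Pairwise fun i j => ⟪d i, d j⟫ = 0) :
    s ≤ ∑ i, ∫ l, |⟪(l.2 : EuclideanSpace ℝ (Fin 3)), d i⟫| ∂μ := by
  rw [← integral_finsetSum _ fun i _ => integrable_abs_inner_snd μ (d i)]
  calc s = ∫ _, s ∂μ := by simp
    _ ≤ _ := integral_mono (integrable_const s)
        (integrable_finsetSum _ fun i _ => integrable_abs_inner_snd μ (d i)) fun l => by
      simpa [norm_eq_of_mem_sphere] using
        mul_norm_le_sum_abs_inner_of_pairwise_orthogonal (by simp) hd horth l.2.1

theorem stmt_6_general (F : Measure (Sph × Sph)) [IsProbabilityMeasure F] (ηb αb : ℝ)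
    (A B : Sph × Sph → EuclideanSpace ℝ (Fin 3) → ℝ)
    (C : Sph × Sph → EuclideanSpace ℝ (Fin 3) → EuclideanSpace ℝ (Fin 3) → ℝ)
    (hCbound : ∀ l a b, ‖a‖ = 1 → ‖b‖ = 1 → |C l a b| ≤ 1)
    (hMalus : ∀ (l : Sph × Sph) (b : EuclideanSpace ℝ (Fin 3)), ‖b‖ = 1 →
      B l b = ηb + αb * ⟪(l.2 : EuclideanSpace ℝ (Fin 3)), b⟫)
    (hplus : ∀ l a b, ‖a‖ = 1 → ‖b‖ = 1 → |A l a + B l b| ≤ 1 + C l a b)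
    (hminus : ∀ l a b, ‖a‖ = 1 → ‖b‖ = 1 → |A l a - B l b| ≤ 1 - C l a b)
    (hmC : ∀ a b, Measurable (fun l => C l a b))
    (φ : ℝ)
    (a b b' : Fin 3 → EuclideanSpace ℝ (Fin 3))
    (ha : ∀ i, ‖a i‖ = 1) (hb : ∀ i, ‖b i‖ = 1) (hb' : ∀ i, ‖b' i‖ = 1)
    (hangle : ∀ i, ⟪b i, b' i⟫ = Real.cos φ)
    (horth : ∀ i j, i ≠ j → ⟪b i - b' i, b j - b' j⟫ = 0) :
    (1/3 : ℝ) * ∑ i : Fin 3, |(∫ l, C l (a i) (b i) ∂F) + (∫ l, C l (a i) (b' i) ∂F)|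
      + (2 * |αb| / 3) * |Real.sin (φ / 2)| ≤ 2 := by
  have hC (x y : EuclideanSpace ℝ (Fin 3)) (hx : ‖x‖ = 1) (hy : ‖y‖ = 1) :
      Integrable (fun l => C l x y) F :=
    .of_bound (hmC x y).aestronglyMeasurable 1 (.of_forall fun l => hCbound l x y hx hy)
  have hB (i : Fin 3) : (fun l => |B l (b i) - B l (b' i)|) =
      fun l => |αb| * |⟪(l.2 : EuclideanSpace ℝ (Fin 3)), b i - b' i⟫| := by
    ext l
    rw [hMalus l _ (hb i), hMalus l _ (hb' i), inner_sub_right, ← abs_mul]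
    ring_nf
  have hpair (i : Fin 3) : |(∫ l, C l (a i) (b i) ∂F) + (∫ l, C l (a i) (b' i) ∂F)| ≤
      2 - |αb| * ∫ l, |⟪(l.2 : EuclideanSpace ℝ (Fin 3)), b i - b' i⟫| ∂F := by
    have h := abs_integral_add_integral_le_two_sub (hC _ _ (ha i) (hb i)) (hC _ _ (ha i) (hb' i))
      (by rw [hB i]; exact (integrable_abs_inner_snd F _).const_mul _)
      (fun l => hplus l _ _ (ha i) (hb i)) (fun l => hminus l _ _ (ha i) (hb i))
      (fun l => hplus l _ _ (ha i) (hb' i)) (fun l => hminus l _ _ (ha i) (hb' i))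
    rwa [hB i, integral_const_mul] at h
  have hgeo := le_sum_integral_abs_inner F
    (fun i => norm_sub_eq_two_mul_abs_sin_half (hb i) (hb' i) (hangle i)) horth
  have hsum := sum_le_sum fun i (_ : i ∈ univ) => hpair i
  simp only [Fin.sum_univ_three] at hsum hgeo ⊢
  linarith [mul_le_mul_of_nonneg_left hgeo (abs_nonneg αb)]

theorem stmt_6 (F : Measure (Sph × Sph)) [IsProbabilityMeasure F] (ηb αb : ℝ)
    (A B : Sph × Sph → EuclideanSpace ℝ (Fin 3) → ℝ)
    (C : Sph × Sph → EuclideanSpace ℝ (Fin 3) → EuclideanSpace ℝ (Fin 3) → ℝ)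
    (hCbound : ∀ l a b, ‖a‖ = 1 → ‖b‖ = 1 → |C l a b| ≤ 1)
    (hMalus : ∀ (l : Sph × Sph) (b : EuclideanSpace ℝ (Fin 3)), ‖b‖ = 1 →
      B l b = ηb + αb * ⟪(l.2 : EuclideanSpace ℝ (Fin 3)), b⟫)
    (hplus : ∀ l a b, ‖a‖ = 1 → ‖b‖ = 1 → |A l a + B l b| ≤ 1 + C l a b)
    (hminus : ∀ l a b, ‖a‖ = 1 → ‖b‖ = 1 → |A l a - B l b| ≤ 1 - C l a b)
    (hmA : ∀ a, Measurable (fun l => A l a))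
    (hmB : ∀ b, Measurable (fun l => B l b))
    (hmC : ∀ a b, Measurable (fun l => C l a b))
    (φ : ℝ) (hφ : φ ∈ Set.Icc 0 Real.pi)
    (a b b' : Fin 3 → EuclideanSpace ℝ (Fin 3))
    (ha : ∀ i, ‖a i‖ = 1) (hb : ∀ i, ‖b i‖ = 1) (hb' : ∀ i, ‖b' i‖ = 1)
    (hangle : ∀ i, ⟪b i, b' i⟫ = Real.cos φ)
    (horth : ∀ i j, i ≠ j → ⟪b i - b' i, b j - b' j⟫ = 0) :
    (1/3 : ℝ) * ∑ i : Fin 3, |(∫ l, C l (a i) (b i) ∂F) + (∫ l, C l (a i) (b' i) ∂F)|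
      + (2 * |αb| / 3) * |Real.sin (φ / 2)| ≤ 2 :=
  stmt_6_general F ηb αb A B C hCbound hMalus hplus hminus hmC φ a b b' ha hb hb' hangle horth
end
end

section
/- (Corollary 1.) Let α_a, α_b be nonzero real numbers and define the singlet quantum correlation with unbiased unsharp measurements E(a, b) := −α_a·α_b·(a·b) for unit vectors a, b ∈ ℝ³. Then there exist unit vectors a, a', b, b' ∈ ℝ³ such that |E(a, b) − E(a, b') + E(a', b) + E(a', b')| > 2·|α_a·α_b|; that is, the local-realism CHSH bound for unbiased unsharp measurements is violated by quantum mechanics whenever |α_a·α_b| > 0. -/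
open scoped RealInnerProductSpace

noncomputable section

/-! Tsirelson's configuration: with `a, a'` orthonormal and `b, b'` the unit vectors at `±45°`
between them, the CHSH combination of inner products is `2√2`. Scaling by `-αa αb` gives a
quantum value `2√2 |αa αb|`, which exceeds the local-realism bound `2 |αa αb|` as soon as
`αa αb ≠ 0`. -/

section Tsirelson

variable {E : Type*} [NormedAddCommGroup E] [InnerProductSpace ℝ E]

theorem norm_add_eq_sqrt_two_of_orthonormal {u v : E} (hu : ‖u‖ = 1) (hv : ‖v‖ = 1)
    (huv : ⟪u, v⟫ = 0) : ‖u + v‖ = √2 := by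
  rw [norm_add_eq_sqrt_iff_real_inner_eq_zero.mpr huv, hu, hv]
  norm_num

theorem exists_unit_chsh_eq_two_sqrt_two {u v : E} (hu : ‖u‖ = 1) (hv : ‖v‖ = 1)
    (huv : ⟪u, v⟫ = 0) :
    ∃ a a' b b' : E, ‖a‖ = 1 ∧ ‖a'‖ = 1 ∧ ‖b‖ = 1 ∧ ‖b'‖ = 1 ∧
      ⟪a, b⟫ - ⟪a, b'⟫ + ⟪a', b⟫ + ⟪a', b'⟫ = 2 * √2 := by
  have hvu : ⟪v, u⟫ = 0 := by rw [real_inner_comm, huv]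
  have huu : ⟪u, u⟫ = 1 := by rw [real_inner_self_eq_norm_sq, hu, one_pow]
  have hvv : ⟪v, v⟫ = 1 := by rw [real_inner_self_eq_norm_sq, hv, one_pow]
  have hsqrt : (0 : ℝ) < √2 := by positivity
  have hunit : ∀ w : E, ‖w‖ = √2 → ‖(√2)⁻¹ • w‖ = 1 := fun w hw => by
    rw [norm_smul, hw, norm_inv, Real.norm_of_nonneg hsqrt.le, inv_mul_cancel₀ hsqrt.ne']
  have hsum : ‖u + v‖ = √2 := norm_add_eq_sqrt_two_of_orthonormal hu hv huv
  have hdiff : ‖v - u‖ = √2 := by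
    rw [sub_eq_add_neg]
    exact norm_add_eq_sqrt_two_of_orthonormal hv (by rwa [norm_neg])
      (by rw [inner_neg_right, hvu, neg_zero])
  refine ⟨u, v, (√2)⁻¹ • (u + v), (√2)⁻¹ • (v - u), hu, hv, hunit _ hsum, hunit _ hdiff, ?_⟩
  simp only [inner_smul_right, inner_add_right, inner_sub_right, huu, hvv, huv, hvu]
  field_simp
  rw [Real.sq_sqrt zero_le_two]
  norm_num

end Tsirelson

theorem stmt_7 (αa αb : ℝ) (hαa : αa ≠ 0) (hαb : αb ≠ 0) :
    ∃ a a' b b' : EuclideanSpace ℝ (Fin 3),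
      ‖a‖ = 1 ∧ ‖a'‖ = 1 ∧ ‖b‖ = 1 ∧ ‖b'‖ = 1 ∧
      |(-(αa * αb * ⟪a, b⟫)) - (-(αa * αb * ⟪a, b'⟫))
          + (-(αa * αb * ⟪a', b⟫)) + (-(αa * αb * ⟪a', b'⟫))|
        > 2 * |αa * αb| := by
  obtain ⟨a, a', b, b', ha, ha', hb, hb', hchsh⟩ :=
    exists_unit_chsh_eq_two_sqrt_two (u := EuclideanSpace.single (0 : Fin 3) (1 : ℝ))
      (v := EuclideanSpace.single 1 1) (by simp) (by simp) (by simp [EuclideanSpace.inner_single_left])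
  refine ⟨a, a', b, b', ha, ha', hb, hb', ?_⟩
  have hquantum : (-(αa * αb * ⟪a, b⟫)) - (-(αa * αb * ⟪a, b'⟫))
      + (-(αa * αb * ⟪a', b⟫)) + (-(αa * αb * ⟪a', b'⟫)) = -(αa * αb) * (2 * √2) := by
    rw [← hchsh]; ring
  have hpos : 0 < |αa * αb| := abs_pos.mpr (mul_ne_zero hαa hαb)
  have hsqrt : 1 < √2 := by rw [Real.lt_sqrt zero_le_one]; norm_num
  rw [hquantum, abs_mul, abs_neg, abs_of_pos (by positivity : (0 : ℝ) < 2 * √2)]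
  nlinarith

end
end

section
/- The supremum over unit vectors a, a', b, b' ∈ ℝ³ of the quantity |a·b − a·b' + a'·b + a'·b'| equals 2√2, and this supremum is attained. -/
/-!
Writing the expression as `⟪a, b - b'⟫ + ⟪a', b + b'⟫`, Cauchy–Schwarz bounds it by
`‖b - b'‖ + ‖b + b'‖`, and the parallelogram law gives `‖b - b'‖² + ‖b + b'‖² = 4` for unit
vectors `b, b'`, so the sum of the two norms is at most `2√2`. Equality holds for an orthonormal
pair `a, a'` and `b, b'` the two diagonals `(a' ± a)/√2`.
-/

open scoped RealInnerProductSpace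

noncomputable section

section CHSH

variable {E : Type*} [NormedAddCommGroup E] [InnerProductSpace ℝ E]

def chshValue (a a' b b' : E) : ℝ := ⟪a, b⟫ - ⟪a, b'⟫ + ⟪a', b⟫ + ⟪a', b'⟫

theorem chshValue_eq_inner_sub_add_inner_add (a a' b b' : E) :
    chshValue a a' b b' = ⟪a, b - b'⟫ + ⟪a', b + b'⟫ := by
  rw [chshValue, inner_sub_right, inner_add_right]
  ring

theorem norm_sub_add_norm_add_le_of_norm_eq_one {b b' : E} (hb : ‖b‖ = 1) (hb' : ‖b'‖ = 1) :
    ‖b - b'‖ + ‖b + b'‖ ≤ 2 * √2 := by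
  have hpar : ‖b + b'‖ ^ 2 + ‖b - b'‖ ^ 2 = 4 := by
    rw [parallelogram_law_with_norm ℝ b b', hb, hb']
    norm_num
  have hsqrt : √2 ^ 2 = 2 := Real.sq_sqrt zero_le_two
  nlinarith [sq_nonneg (‖b - b'‖ - ‖b + b'‖), Real.sqrt_nonneg 2,
    norm_nonneg (b - b'), norm_nonneg (b + b')]

theorem abs_chshValue_le {a a' b b' : E} (ha : ‖a‖ = 1) (ha' : ‖a'‖ = 1) (hb : ‖b‖ = 1)
    (hb' : ‖b'‖ = 1) : |chshValue a a' b b'| ≤ 2 * √2 := by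
  rw [chshValue_eq_inner_sub_add_inner_add]
  calc |⟪a, b - b'⟫ + ⟪a', b + b'⟫| ≤ |⟪a, b - b'⟫| + |⟪a', b + b'⟫| := abs_add_le _ _
    _ ≤ ‖a‖ * ‖b - b'‖ + ‖a'‖ * ‖b + b'‖ :=
      add_le_add (abs_real_inner_le_norm _ _) (abs_real_inner_le_norm _ _)
    _ ≤ 2 * √2 := by
      rw [ha, ha', one_mul, one_mul]
      exact norm_sub_add_norm_add_le_of_norm_eq_one hb hb'

theorem norm_inv_sqrt_two_smul_add {u v : E} (hu : ‖u‖ = 1) (hv : ‖v‖ = 1) (huv : ⟪u, v⟫ = 0) :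
    ‖(√2)⁻¹ • (u + v)‖ = 1 := by
  rw [norm_smul, norm_add_eq_sqrt_iff_real_inner_eq_zero.mpr huv, hu, hv, norm_inv,
    Real.norm_of_nonneg (Real.sqrt_nonneg 2)]
  norm_num

theorem norm_inv_sqrt_two_smul_sub {u v : E} (hu : ‖u‖ = 1) (hv : ‖v‖ = 1) (huv : ⟪u, v⟫ = 0) :
    ‖(√2)⁻¹ • (v - u)‖ = 1 := by
  rw [norm_smul, norm_sub_eq_sqrt_iff_real_inner_eq_zero.mpr (real_inner_comm u v ▸ huv), hu, hv,
    norm_inv, Real.norm_of_nonneg (Real.sqrt_nonneg 2)]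
  norm_num

theorem chshValue_diagonals {u v : E} (hu : ‖u‖ = 1) (hv : ‖v‖ = 1) (huv : ⟪u, v⟫ = 0) :
    chshValue u v ((√2)⁻¹ • (u + v)) ((√2)⁻¹ • (v - u)) = 2 * √2 := by
  have hvu : ⟪v, u⟫ = 0 := real_inner_comm u v ▸ huv
  simp only [chshValue, inner_smul_right, inner_add_right, inner_sub_right, huv, hvu,
    real_inner_self_eq_norm_sq, hu, hv]
  have hsqrt : √2 ^ 2 = 2 := Real.sq_sqrt zero_le_two
  field_simp
  linarith

end CHSH

theorem stmt_8 :
    IsGreatest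
      {x : ℝ | ∃ a a' b b' : EuclideanSpace ℝ (Fin 3),
        ‖a‖ = 1 ∧ ‖a'‖ = 1 ∧ ‖b‖ = 1 ∧ ‖b'‖ = 1 ∧
        x = |⟪a, b⟫ - ⟪a, b'⟫ + ⟪a', b⟫ + ⟪a', b'⟫|}
      (2 * Real.sqrt 2) := by
  constructor
  · set u : EuclideanSpace ℝ (Fin 3) := EuclideanSpace.single 0 1
    set v : EuclideanSpace ℝ (Fin 3) := EuclideanSpace.single 1 1
    have hu : ‖u‖ = 1 := by simp [u]
    have hv : ‖v‖ = 1 := by simp [v]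
    have huv : ⟪u, v⟫ = 0 := by simp [u, v, EuclideanSpace.inner_single_left]
    refine ⟨u, v, _, _, hu, hv, norm_inv_sqrt_two_smul_add hu hv huv,
      norm_inv_sqrt_two_smul_sub hu hv huv, ?_⟩
    change _ = |chshValue _ _ _ _|
    rw [chshValue_diagonals hu hv huv, abs_of_pos (by positivity)]
  · rintro x ⟨a, a', b, b', ha, ha', hb, hb', rfl⟩
    exact abs_chshValue_le ha ha' hb hb'

end
end

section
/- (Corollary 2.) Let α_a, α_b be real numbers with α_a²·α_b² + α_b²/9 > 1. Then there exists an angle φ ∈ (0, π) such that 2·|α_a·α_b|·cos(φ/2) + (2·|α_b|/3)·sin(φ/2) > 2. Conversely, if α_a²·α_b² + α_b²/9 ≤ 1, then 2·|α_a·α_b|·cos(φ/2) + (2·|α_b|/3)·sin(φ/2) ≤ 2 for every φ ∈ [0, π]. Hence the Leggett inequality for unbiased unsharp measurements can be violated by the quantum singlet-state predictions if and only if (α_a² + 1/9)·α_b² > 1. -/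
/-!
Write `A = 2|α_a α_b|`, `B = 2|α_b|/3`, so that `A² + B² = 4 (α_a² α_b² + α_b²/9)`.
By Cauchy–Schwarz, `A cos t + B sin t ≤ √(A² + B²)` for every `t`, which gives the bound `2`
when `α_a² α_b² + α_b²/9 ≤ 1`. Conversely, the maximum `√(A² + B²)` is attained at the argument
`t ∈ (0, π/2]` of `A + B i`; when it exceeds `2`, continuity moves the angle `φ = 2t` into the
open interval `(0, π)`.
-/

open Real Set

lemma sq_mul_cos_add_mul_sin_le (A B t : ℝ) : (A * cos t + B * sin t) ^ 2 ≤ A ^ 2 + B ^ 2 := by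
  nlinarith [sq_nonneg (A * sin t - B * cos t), sin_sq_add_cos_sq t]

lemma exists_mem_Ioc_mul_cos_add_mul_sin_eq_sqrt {A B : ℝ} (hA : 0 ≤ A) (hB : 0 < B) :
    ∃ t ∈ Ioc 0 (π / 2), A * cos t + B * sin t = √(A ^ 2 + B ^ 2) := by
  set z : ℂ := ⟨A, B⟩
  refine ⟨z.arg, ⟨?_, Complex.arg_le_pi_div_two_iff.2 (Or.inl hA)⟩, ?_⟩
  · refine (Complex.arg_nonneg_iff.2 hB.le).lt_of_ne' fun h ↦ hB.ne' ?_
    exact (Complex.arg_eq_zero_iff.1 h).2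
  · have hre : ‖z‖ * cos z.arg = A := Complex.norm_mul_cos_arg z
    have him : ‖z‖ * sin z.arg = B := Complex.norm_mul_sin_arg z
    calc A * cos z.arg + B * sin z.arg = ‖z‖ * (sin z.arg ^ 2 + cos z.arg ^ 2) := by
          rw [← hre, ← him]; ring
      _ = √(A ^ 2 + B ^ 2) := by rw [sin_sq_add_cos_sq, mul_one, Complex.norm_eq_sqrt_sq_add_sq]

lemma exists_mem_Ioo_lt_of_lt_apply {α β : Type*} [TopologicalSpace α] [LinearOrder α]
    [OrderTopology α] [DenselyOrdered α] [NoMinOrder α] [TopologicalSpace β] [LinearOrder β]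
    [OrderClosedTopology β] {f : α → β} {a b : α} {c : β} (hf : ContinuousAt f b) (hab : a < b)
    (hc : c < f b) : ∃ x ∈ Ioo a b, c < f x :=
  (Filter.Eventually.and (Ioo_mem_nhdsLT hab)
    (nhdsWithin_le_nhds (hf.eventually (eventually_gt_nhds hc)))).exists

theorem stmt_9 (αa αb : ℝ) :
    (αa ^ 2 * αb ^ 2 + αb ^ 2 / 9 > 1 →
      ∃ φ ∈ Set.Ioo (0 : ℝ) Real.pi,
        2 * |αa * αb| * Real.cos (φ / 2) + 2 * |αb| / 3 * Real.sin (φ / 2) > 2) ∧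
    (αa ^ 2 * αb ^ 2 + αb ^ 2 / 9 ≤ 1 →
      ∀ φ ∈ Set.Icc (0 : ℝ) Real.pi,
        2 * |αa * αb| * Real.cos (φ / 2) + 2 * |αb| / 3 * Real.sin (φ / 2) ≤ 2) := by
  set A := 2 * |αa * αb|
  set B := 2 * |αb| / 3
  have hsq : A ^ 2 + B ^ 2 = 4 * (αa ^ 2 * αb ^ 2 + αb ^ 2 / 9) := by
    simp only [A, B, div_pow, mul_pow, sq_abs]; ring
  constructor
  · intro h
    have hB : 0 < B := by
      have : αb ≠ 0 := by rintro rfl; norm_num at h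
      positivity
    have hA : 0 ≤ A := by positivity
    obtain ⟨t, ⟨ht0, htπ⟩, ht⟩ := exists_mem_Ioc_mul_cos_add_mul_sin_eq_sqrt hA hB
    have hmax : 2 < A * cos (2 * t / 2) + B * sin (2 * t / 2) := by
      rw [mul_div_cancel_left₀ t two_ne_zero, ht, lt_sqrt zero_le_two]
      linarith
    obtain ⟨φ, ⟨hφ0, hφt⟩, hφ⟩ :=
      exists_mem_Ioo_lt_of_lt_apply (f := fun φ ↦ A * cos (φ / 2) + B * sin (φ / 2))
        (by fun_prop) (by linarith : (0 : ℝ) < 2 * t) hmax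
    exact ⟨φ, ⟨hφ0, by linarith⟩, hφ⟩
  · intro h φ _
    refine (abs_le_of_sq_le_sq ?_ zero_le_two).trans' (le_abs_self _)
    linarith [sq_mul_cos_add_mul_sin_le A B (φ / 2)]
end

section
/- Let S, P be complex numbers not both zero, let n be a unit vector in ℝ³, and define the Kraus operators M_±(n) := (S·I ± P·(σ·n)) / √(2(|S|² + |P|²)) acting on ℂ². Then M₊(n)†M₊(n) = (I + α σ·n)/2 and M₋(n)†M₋(n) = (I − α σ·n)/2, where α = (S̄·P + S·P̄)/(|S|² + |P|²) = 2Re(S̄P)/(|S|² + |P|²); in particular M₊(n)†M₊(n) + M₋(n)†M₋(n) = I, so these operators realize an unbiased unsharp POVM measurement of spin along n with unsharpness parameter α. -/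
open scoped Matrix

noncomputable section

/-- The Pauli matrix σx. -/
def σx : Matrix (Fin 2) (Fin 2) ℂ := !![0, 1; 1, 0]

/-- The Pauli matrix σy. -/
def σy : Matrix (Fin 2) (Fin 2) ℂ := !![0, -Complex.I; Complex.I, 0]

/-- The Pauli matrix σz. -/
def σz : Matrix (Fin 2) (Fin 2) ℂ := !![1, 0; 0, -1]

/-- σ·v for v ∈ ℝ³. -/
def pauliDot (v : EuclideanSpace ℝ (Fin 3)) : Matrix (Fin 2) (Fin 2) ℂ :=
  (v 0 : ℂ) • σx + (v 1 : ℂ) • σy + (v 2 : ℂ) • σz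

/-- The Kraus operators M_±(n) = (S·I ± P·(σ·n)) / √(2(|S|² + |P|²)) for the hyperon
weak-decay measurement. -/
def kraus (S P : ℂ) (s : ℝ) (n : EuclideanSpace ℝ (Fin 3)) : Matrix (Fin 2) (Fin 2) ℂ :=
  ((Real.sqrt (2 * (Complex.normSq S + Complex.normSq P)) : ℂ))⁻¹ •
    (S • (1 : Matrix (Fin 2) (Fin 2) ℂ) + (s : ℂ) • (P • pauliDot n))

/-! Since `σ·n` is Hermitian and squares to `‖n‖² I`, expanding
`(S I + P σ·n)†(S I + P σ·n)` gives `(|S|² + |P|²) I + 2 Re(S̄ P) σ·n`; the normalisation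
`1 / √(2(|S|² + |P|²))` turns this into `(I ± α σ·n) / 2`, and replacing `P` by `-P` flips the
sign of `α`. -/

theorem pauliDot_conjTranspose (v : EuclideanSpace ℝ (Fin 3)) : (pauliDot v)ᴴ = pauliDot v := by
  simp [pauliDot, σx, σy, σz, ← Matrix.ext_iff, Fin.forall_fin_two]

theorem pauliDot_mul_self (v : EuclideanSpace ℝ (Fin 3)) :
    pauliDot v * pauliDot v = ((‖v‖ ^ 2 : ℝ) : ℂ) • 1 := by
  rw [EuclideanSpace.norm_sq_eq, Fin.sum_univ_three]
  ext i j
  fin_cases i <;> fin_cases j <;>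
    simp [pauliDot, σx, σy, σz, Matrix.mul_apply, Fin.sum_univ_two, sq_abs] <;>
    ring_nf <;> simp [Complex.I_sq]

theorem conjTranspose_smul_one_add_smul_mul_self {m : Type*} [Fintype m] [DecidableEq m]
    (S P : ℂ) {A : Matrix m m ℂ} (hA : Aᴴ = A) (hA2 : A * A = 1) :
    (S • 1 + P • A)ᴴ * (S • 1 + P • A) =
      ((Complex.normSq S + Complex.normSq P : ℝ) : ℂ) • 1
        + ((2 * (starRingEnd ℂ S * P).re : ℝ) : ℂ) • A := by
  simp only [Matrix.conjTranspose_add, Matrix.conjTranspose_smul, Matrix.conjTranspose_one, hA,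
    Matrix.add_mul, Matrix.mul_add, Matrix.smul_mul, Matrix.mul_smul, Matrix.one_mul,
    Matrix.mul_one, hA2]
  push_cast
  rw [Complex.normSq_eq_conj_mul_self, Complex.normSq_eq_conj_mul_self, Complex.re_eq_add_conj]
  simp only [map_mul, Complex.conj_conj, Complex.star_def]
  module

def asymmetry (S P : ℂ) : ℝ :=
  2 * (starRingEnd ℂ S * P).re / (Complex.normSq S + Complex.normSq P)

theorem kraus_conjTranspose_mul_self {S P : ℂ} (hSP : ¬(S = 0 ∧ P = 0))
    {n : EuclideanSpace ℝ (Fin 3)} (hn : ‖n‖ = 1) {s : ℝ} (hs : s ^ 2 = 1) :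
    (kraus S P s n)ᴴ * kraus S P s n
      = (1 / 2 : ℂ) • (1 + ((s * asymmetry S P : ℝ) : ℂ) • pauliDot n) := by
  have hN : 0 < Complex.normSq S + Complex.normSq P := by
    rcases not_and_or.mp hSP with hS | hP
    · exact add_pos_of_pos_of_nonneg (Complex.normSq_pos.mpr hS) (Complex.normSq_nonneg P)
    · exact add_pos_of_nonneg_of_pos (Complex.normSq_nonneg S) (Complex.normSq_pos.mpr hP)
  have hσ : pauliDot n * pauliDot n = 1 := by simp [pauliDot_mul_self, hn]
  rw [kraus, smul_smul, Matrix.conjTranspose_smul, Matrix.smul_mul, Matrix.mul_smul, smul_smul,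
    conjTranspose_smul_one_add_smul_mul_self S _ (pauliDot_conjTranspose n) hσ]
  have hsq : Complex.normSq (s : ℂ) = 1 := by rw [Complex.normSq_ofReal, ← sq, hs]
  have hscale : ((√(2 * (Complex.normSq S + Complex.normSq P)) : ℂ))⁻¹
      * ((√(2 * (Complex.normSq S + Complex.normSq P)) : ℂ))⁻¹
      = ((2 * (Complex.normSq S + Complex.normSq P) : ℝ) : ℂ)⁻¹ := by
    rw [← mul_inv, ← Complex.ofReal_mul, Real.mul_self_sqrt (by positivity)]
  have hN' : (Complex.normSq S : ℂ) + Complex.normSq P ≠ 0 := by exact_mod_cast hN.ne'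
  simp only [Complex.normSq_mul, hsq, one_mul, asymmetry, Complex.star_def, map_inv₀,
    Complex.conj_ofReal, hscale]
  rw [mul_left_comm, Complex.re_ofReal_mul]
  push_cast
  match_scalars <;> field_simp

theorem stmt_11 (S P : ℂ) (hSP : ¬(S = 0 ∧ P = 0))
    (n : EuclideanSpace ℝ (Fin 3)) (hn : ‖n‖ = 1)
    (α : ℝ) (hα : α = 2 * (starRingEnd ℂ S * P).re / (Complex.normSq S + Complex.normSq P)) :
    (kraus S P 1 n)ᴴ * kraus S P 1 n
        = (1/2 : ℂ) • ((1 : Matrix (Fin 2) (Fin 2) ℂ) + (α : ℂ) • pauliDot n) ∧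
    (kraus S P (-1) n)ᴴ * kraus S P (-1) n
        = (1/2 : ℂ) • ((1 : Matrix (Fin 2) (Fin 2) ℂ) - (α : ℂ) • pauliDot n) ∧
    (kraus S P 1 n)ᴴ * kraus S P 1 n + (kraus S P (-1) n)ᴴ * kraus S P (-1) n = 1 := by
  obtain rfl : α = asymmetry S P := hα
  have hplus := kraus_conjTranspose_mul_self hSP hn (s := 1) (by norm_num)
  have hminus := kraus_conjTranspose_mul_self hSP hn (s := -1) (by norm_num)
  rw [one_mul] at hplus
  rw [neg_one_mul, Complex.ofReal_neg, neg_smul, ← sub_eq_add_neg] at hminus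
  refine ⟨hplus, hminus, ?_⟩
  rw [hplus, hminus]
  module

end
end

section
/- Let Ā, B̄, B̄', C, C' be real numbers satisfying |Ā + B̄| ≤ 1 + C, |Ā + B̄'| ≤ 1 + C', |Ā − B̄| ≤ 1 − C, and |Ā − B̄'| ≤ 1 − C'. Then |C + C'| ≤ 2 − |B̄ − B̄'| and |C − C'| ≤ 2 − |B̄ + B̄'|. -/
/-!
Each pair of hypotheses pins `C` between `|A + B| - 1` and `1 - |A - B|`. Adding the bounds for
`C` and `C'` and applying the triangle inequality to `(A ± B) - (A ± B')` gives the first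
inequality; the second is the first with `(B', C')` replaced by `(-B', -C')`.
-/

theorem abs_add_le_two_sub_abs_sub_of_abs_le {α : Type*} [CommRing α] [LinearOrder α]
    [IsStrictOrderedRing α] {a b b' c c' : α}
    (h1 : |a + b| ≤ 1 + c) (h2 : |a + b'| ≤ 1 + c')
    (h3 : |a - b| ≤ 1 - c) (h4 : |a - b'| ≤ 1 - c') :
    |c + c'| ≤ 2 - |b - b'| := by
  have h_minus : |b - b'| ≤ |a - b| + |a - b'| := by
    simpa only [abs_sub_comm b a] using abs_sub_le b a b'
  have h_plus : |b - b'| ≤ |a + b| + |a + b'| := by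
    simpa only [add_sub_add_left_eq_sub] using abs_sub (a + b) (a + b')
  rw [abs_le]
  constructor <;> linarith

theorem stmt_14 (A B B' C C' : ℝ)
    (h1 : |A + B| ≤ 1 + C) (h2 : |A + B'| ≤ 1 + C')
    (h3 : |A - B| ≤ 1 - C) (h4 : |A - B'| ≤ 1 - C') :
    |C + C'| ≤ 2 - |B - B'| ∧ |C - C'| ≤ 2 - |B + B'| := by
  refine ⟨abs_add_le_two_sub_abs_sub_of_abs_le h1 h2 h3 h4, ?_⟩
  simpa only [sub_neg_eq_add, ← sub_eq_add_neg] using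
    abs_add_le_two_sub_abs_sub_of_abs_le (b' := -B') (c' := -C')
      h1 (by simpa only [← sub_eq_add_neg] using h4) h3 (by simpa only [sub_neg_eq_add] using h2)
end

section
/- Let F be a probability measure on S² × S² (pairs λ = (u, v) of unit polarization vectors), let η_b, α_b be real numbers, and suppose that for each λ there are measurable functions Ā_λ(a), B̄_λ(b), and C_λ(a, b) with |C_λ(a,b)| ≤ 1, satisfying: B̄_λ(b) = η_b + α_b·(v·b) for all unit b, and |Ā_λ(a) ± B̄_λ(b)| ≤ 1 ± C_λ(a, b) for all unit a, b. Define E(a, b) := ∫ C_λ(a, b) dF(λ). Then for all unit vectors a, b, b' ∈ ℝ³: |E(a, b) + E(a, b')| ≤ 2 − |α_b|·∫_{S²×S²} |v·(b − b')| dF(u, v). -/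
/-! For every hidden state the positivity constraints bound `|C λ(a,b) + C λ(a,b')|` by
`2 - |B̄ λ(b) - B̄ λ(b')|`, and by Malus' law `|B̄ λ(b) - B̄ λ(b')| = |α_b| |v·(b - b')|`.
Integrating this pointwise bound against `F` gives the inequality. -/

open scoped RealInnerProductSpace
open MeasureTheory

noncomputable section

/-- `|y - z|` is at most both `|x - y| + |x - z|` and `|x + y| + |x + z|`, and the hypotheses
bound these sums by `2 - (c + c')` and `2 + (c + c')`. -/
theorem abs_add_le_two_sub_abs_sub_s15 {x y z c c' : ℝ}
    (hxy_add : |x + y| ≤ 1 + c) (hxy_sub : |x - y| ≤ 1 - c)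
    (hxz_add : |x + z| ≤ 1 + c') (hxz_sub : |x - z| ≤ 1 - c') :
    |c + c'| ≤ 2 - |y - z| := by
  rw [abs_le] at hxy_add hxy_sub hxz_add hxz_sub ⊢
  constructor <;> cases abs_cases (y - z) <;> linarith

theorem abs_integral_add_integral_le {α : Type*} [MeasurableSpace α] (μ : Measure α)
    [IsProbabilityMeasure μ] {f g h : α → ℝ} (hf : Integrable f μ) (hg : Integrable g μ)
    (hh : Integrable h μ) (c k : ℝ) (hle : ∀ x, |f x + g x| ≤ c - k * h x) :
    |∫ x, f x ∂μ + ∫ x, g x ∂μ| ≤ c - k * ∫ x, h x ∂μ :=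
  calc |∫ x, f x ∂μ + ∫ x, g x ∂μ|
      = |∫ x, (f x + g x) ∂μ| := by rw [integral_add hf hg]
    _ ≤ ∫ x, |f x + g x| ∂μ := abs_integral_le_integral_abs
    _ ≤ ∫ x, (c - k * h x) ∂μ :=
        integral_mono (hf.add hg).abs ((integrable_const c).sub (hh.const_mul k)) hle
    _ = c - k * ∫ x, h x ∂μ := by
        rw [integral_sub (integrable_const c) (hh.const_mul k), integral_const,
          integral_const_mul, probReal_univ, one_smul]

theorem stmt_15_general (F : Measure (Sph × Sph)) [IsProbabilityMeasure F] (ηb αb : ℝ)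
    (A B : Sph × Sph → EuclideanSpace ℝ (Fin 3) → ℝ)
    (C : Sph × Sph → EuclideanSpace ℝ (Fin 3) → EuclideanSpace ℝ (Fin 3) → ℝ)
    (hCbound : ∀ l a b, ‖a‖ = 1 → ‖b‖ = 1 → |C l a b| ≤ 1)
    (hMalus : ∀ (l : Sph × Sph) (b : EuclideanSpace ℝ (Fin 3)), ‖b‖ = 1 →
      B l b = ηb + αb * ⟪(l.2 : EuclideanSpace ℝ (Fin 3)), b⟫)
    (hplus : ∀ l a b, ‖a‖ = 1 → ‖b‖ = 1 → |A l a + B l b| ≤ 1 + C l a b)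
    (hminus : ∀ l a b, ‖a‖ = 1 → ‖b‖ = 1 → |A l a - B l b| ≤ 1 - C l a b)
    (hmC : ∀ a b, Measurable (fun l => C l a b))
    (a b b' : EuclideanSpace ℝ (Fin 3)) (ha : ‖a‖ = 1) (hb : ‖b‖ = 1) (hb' : ‖b'‖ = 1) :
    |(∫ l, C l a b ∂F) + (∫ l, C l a b' ∂F)|
      ≤ 2 - |αb| * ∫ l : Sph × Sph, |⟪(l.2 : EuclideanSpace ℝ (Fin 3)), b - b'⟫| ∂F := by
  have hC : ∀ b, ‖b‖ = 1 → Integrable (fun l => C l a b) F := fun b hb =>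
    .of_bound (hmC a b).aestronglyMeasurable 1 (.of_forall fun l => hCbound l a b ha hb)
  have hprojection : Integrable
      (fun l : Sph × Sph => |⟪(l.2 : EuclideanSpace ℝ (Fin 3)), b - b'⟫|) F :=
    (((continuous_subtype_val.comp continuous_snd).inner continuous_const).abs
      ).integrable_of_hasCompactSupport (.of_compactSpace _)
  refine abs_integral_add_integral_le F (hC b hb) (hC b' hb') hprojection 2 |αb| fun l => ?_
  have hBob : |B l b - B l b'| = |αb| * |⟪(l.2 : EuclideanSpace ℝ (Fin 3)), b - b'⟫| := by
    rw [hMalus l b hb, hMalus l b' hb', inner_sub_right, ← abs_mul]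
    ring_nf
  exact hBob ▸ abs_add_le_two_sub_abs_sub_s15 (hplus l a b ha hb) (hminus l a b ha hb)
    (hplus l a b' ha hb') (hminus l a b' ha hb')

theorem stmt_15 (F : Measure (Sph × Sph)) [IsProbabilityMeasure F] (ηb αb : ℝ)
    (A B : Sph × Sph → EuclideanSpace ℝ (Fin 3) → ℝ)
    (C : Sph × Sph → EuclideanSpace ℝ (Fin 3) → EuclideanSpace ℝ (Fin 3) → ℝ)
    (hCbound : ∀ l a b, ‖a‖ = 1 → ‖b‖ = 1 → |C l a b| ≤ 1)
    (hMalus : ∀ (l : Sph × Sph) (b : EuclideanSpace ℝ (Fin 3)), ‖b‖ = 1 →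
      B l b = ηb + αb * ⟪(l.2 : EuclideanSpace ℝ (Fin 3)), b⟫)
    (hplus : ∀ l a b, ‖a‖ = 1 → ‖b‖ = 1 → |A l a + B l b| ≤ 1 + C l a b)
    (hminus : ∀ l a b, ‖a‖ = 1 → ‖b‖ = 1 → |A l a - B l b| ≤ 1 - C l a b)
    (hmA : ∀ a, Measurable (fun l => A l a))
    (hmB : ∀ b, Measurable (fun l => B l b))
    (hmC : ∀ a b, Measurable (fun l => C l a b))
    (a b b' : EuclideanSpace ℝ (Fin 3)) (ha : ‖a‖ = 1) (hb : ‖b‖ = 1) (hb' : ‖b'‖ = 1) :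
    |(∫ l, C l a b ∂F) + (∫ l, C l a b' ∂F)|
      ≤ 2 - |αb| * ∫ l : Sph × Sph, |⟪(l.2 : EuclideanSpace ℝ (Fin 3)), b - b'⟫| ∂F :=
  stmt_15_general F ηb αb A B C hCbound hMalus hplus hminus hmC a b b' ha hb hb'

end
end
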